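/- arXiv:2107.02144 — 2 statements merged into one kernel-verified Lean document; each statement's English description precedes it below -/
import Mathlib

section
/- Let A be a finite alphabet, f₁ : A → A, f₂ : A × A → A, and let C ⊆ A³ be unambiguous for the Diamond Network with these functions. Then f₁ is injective on the set π(C) = {x₁ : (x₁,x₂,x₃) ∈ C} of first coordinates of codewords. -/
open Finset

/-- Hamming distance on triples. -/
def dH3 {A : Type*} [DecidableEq A] (x y : A × A × A) : ℕ :=
  (if x.1 = y.1 then 0 else 1) + (if x.2.1 = y.2.1 then 0 else 1) +
    (if x.2.2 = y.2.2 then 0 else 1)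

/-- The set of possible outputs at the terminal of the Diamond Network. -/
def Omega {A : Type*} [Fintype A] [DecidableEq A] (f₁ : A → A) (f₂ : A → A → A)
    (x : A × A × A) : Finset (A × A) :=
  (Finset.univ.filter fun x' : A × A × A => dH3 x' x ≤ 1).image
    fun x' => (f₁ x'.1, f₂ x'.2.1 x'.2.2)

/-- An outer code is unambiguous if output sets of distinct codewords are disjoint. -/
def Unambiguous {A : Type*} [Fintype A] [DecidableEq A] (f₁ : A → A) (f₂ : A → A → A)
    (C : Finset (A × A × A)) : Prop :=
  ∀ x ∈ C, ∀ y ∈ C, x ≠ y → Disjoint (Omega f₁ f₂ x) (Omega f₁ f₂ y)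

section DiamondNetwork

variable {A : Type*} [DecidableEq A]

lemma dH3_mk_snd_le_one (x : A × A × A) (b : A) : dH3 (x.1, b, x.2.2) x ≤ 1 := by
  simp only [dH3, if_true]
  split_ifs <;> simp

lemma dH3_mk_thd_le_one (x : A × A × A) (c : A) : dH3 (x.1, x.2.1, c) x ≤ 1 := by
  simp only [dH3, if_true]
  split_ifs <;> simp

variable [Fintype A] (f₁ : A → A) (f₂ : A → A → A)

lemma mem_Omega_of_dH3_le_one {x x' : A × A × A} (h : dH3 x' x ≤ 1) :
    (f₁ x'.1, f₂ x'.2.1 x'.2.2) ∈ Omega f₁ f₂ x :=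
  mem_image_of_mem _ (mem_filter.mpr ⟨mem_univ _, h⟩)

/-- The output `(f₁ x₁, f₂ x₂ y₃)` is reached from `x` by corrupting `x₃` and from `y` by
corrupting `y₂`, once `f₁ x₁ = f₁ y₁`. -/
lemma not_disjoint_Omega_of_apply_fst_eq {x y : A × A × A} (h : f₁ x.1 = f₁ y.1) :
    ¬Disjoint (Omega f₁ f₂ x) (Omega f₁ f₂ y) := by
  have hx : (f₁ x.1, f₂ x.2.1 y.2.2) ∈ Omega f₁ f₂ x :=
    mem_Omega_of_dH3_le_one f₁ f₂ (dH3_mk_thd_le_one x y.2.2)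
  have hy : (f₁ x.1, f₂ x.2.1 y.2.2) ∈ Omega f₁ f₂ y := by
    rw [h]
    exact mem_Omega_of_dH3_le_one f₁ f₂ (dH3_mk_snd_le_one y x.2.1)
  exact fun hd => disjoint_left.mp hd hx hy

end DiamondNetwork

theorem stmt2 {A : Type*} [Fintype A] [DecidableEq A]
    (f₁ : A → A) (f₂ : A → A → A) (C : Finset (A × A × A))
    (hC : Unambiguous f₁ f₂ C) :
    ∀ x ∈ C, ∀ y ∈ C, f₁ x.1 = f₁ y.1 → x.1 = y.1 := by
  intro x hx y hy hf
  by_contra hne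
  exact not_disjoint_Omega_of_apply_fst_eq f₁ f₂ hf
    (hC x hx y hy fun hxy => hne (congrArg Prod.fst hxy))
end

section
/- Let A be a finite alphabet. Suppose C ⊆ A³ and there exist distinct x, y ∈ C with dH(x,y) ≤ 2. Then for every pair of functions f₁ : A → A and f₂ : A × A → A, C is not unambiguous for the Diamond Network: there exists z ∈ Ω(x) ∩ Ω(y). -/
/-!
Two triples at Hamming distance at most 2 agree in some coordinate, so changing one coordinate
of each makes them equal: they have a common Hamming neighbour `w`. The adversary can turn either
codeword into `w`, and both transmissions then produce the terminal output of `w`.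
-/

open Finset

theorem exists_dH3_le_one_of_dH3_le_two {A : Type*} [DecidableEq A] {x y : A × A × A}
    (h : dH3 x y ≤ 2) : ∃ w, dH3 w x ≤ 1 ∧ dH3 w y ≤ 1 := by
  obtain ⟨a, b, c⟩ := x
  obtain ⟨a', b', c'⟩ := y
  by_cases ha : a = a'
  · subst ha
    refine ⟨(a, b', c), ?_, ?_⟩ <;> simp only [dH3] <;> split_ifs <;> omega
  · refine ⟨(a', b, c), ?_, ?_⟩ <;> simp only [dH3] at h ⊢ <;> split_ifs at h ⊢ <;> omega

theorem output_mem_Omega {A : Type*} [Fintype A] [DecidableEq A] (f₁ : A → A)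
    (f₂ : A → A → A) {x w : A × A × A} (h : dH3 w x ≤ 1) :
    (f₁ w.1, f₂ w.2.1 w.2.2) ∈ Omega f₁ f₂ x :=
  mem_image_of_mem _ (mem_filter.2 ⟨mem_univ w, h⟩)

theorem stmt15_general {A : Type*} [Fintype A] [DecidableEq A]
    (x y : A × A × A) (hd : dH3 x y ≤ 2) :
    ∀ (f₁ : A → A) (f₂ : A → A → A),
      ∃ z : A × A, z ∈ Omega f₁ f₂ x ∧ z ∈ Omega f₁ f₂ y := by
  intro f₁ f₂
  obtain ⟨w, hwx, hwy⟩ := exists_dH3_le_one_of_dH3_le_two hd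
  exact ⟨_, output_mem_Omega f₁ f₂ hwx, output_mem_Omega f₁ f₂ hwy⟩

theorem stmt15 {A : Type*} [Fintype A] [DecidableEq A] (C : Finset (A × A × A))
    (x y : A × A × A) (hx : x ∈ C) (hy : y ∈ C) (hxy : x ≠ y) (hd : dH3 x y ≤ 2) :
    ∀ (f₁ : A → A) (f₂ : A → A → A),
      ∃ z : A × A, z ∈ Omega f₁ f₂ x ∧ z ∈ Omega f₁ f₂ y :=
  stmt15_general x y hd
end
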